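/- arXiv:1608.00709 — 4 statements merged into one kernel-verified Lean document; each statement's English description precedes it below -/
import Mathlib

section
/- If Γ₁ is a subgroup of finite index in a group Γ₂ and Γ₁ is Jordan with weak Jordan constant J̄(Γ₁), then Γ₂ is Jordan and J̄(Γ₂) ≤ [Γ₂ : Γ₁] · J̄(Γ₁). -/
/-- `J` is a weak Jordan bound for `Γ`: every finite subgroup contains an abelian
subgroup of index at most `J`. -/
def WeakJordanBound (Γ : Type*) [Group Γ] (J : ℕ) : Prop :=
  ∀ G : Subgroup Γ, Finite G →
    ∃ A : Subgroup Γ, A ≤ G ∧ IsMulCommutative A ∧ A.relIndex G ≤ J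

/-- `J` is a Jordan bound for `Γ`: every finite subgroup contains a normal abelian
subgroup of index at most `J`. -/
def JordanBound (Γ : Type*) [Group Γ] (J : ℕ) : Prop :=
  ∀ G : Subgroup Γ, Finite G →
    ∃ A : Subgroup Γ, A ≤ G ∧ IsMulCommutative A ∧ (A.subgroupOf G).Normal ∧ A.relIndex G ≤ J

/-- A group is Jordan if it admits some Jordan bound. -/
def JordanGroup (Γ : Type*) [Group Γ] : Prop := ∃ J, JordanBound Γ J

/-- The weak Jordan constant: the least weak Jordan bound. -/
noncomputable def weakJordanConst (Γ : Type*) [Group Γ] : ℕ :=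
  sInf {J | WeakJordanBound Γ J}

/-!
A finite subgroup `G ≤ Γ₂` meets `Γ₁` in a subgroup of index at most `[Γ₂ : Γ₁]` in `G`, and
`G ⊓ Γ₁` contains an abelian subgroup of index at most `J̄(Γ₁)`; indices multiply along
`A ≤ G ⊓ Γ₁ ≤ G`. A weak Jordan bound `J` yields the Jordan bound `J !`: the normal core of an
abelian subgroup of index `j` is still abelian, and its index is at most `j !` because it is the
kernel of the action on the `j` cosets.
-/

open Nat

namespace Subgroup

variable {G : Type*} [Group G]

theorem isMulCommutative_of_le {A B : Subgroup G} (hBA : B ≤ A) [IsMulCommutative A] :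
    IsMulCommutative B :=
  .of_setLike_mul_comm fun _ ha _ hb ↦ setLike_mul_comm (hBA ha) (hBA hb)

theorem index_normalCore_le_factorial (H : Subgroup G) [H.FiniteIndex] :
    H.normalCore.index ≤ H.index ! := by
  rw [normalCore_eq_ker, index_ker, index_eq_card, ← Nat.card_perm]
  exact card_le_card_group _

instance finite_subgroupOf {H : Subgroup G} [Finite H] (K : Subgroup G) :
    Finite (H.subgroupOf K) :=
  Finite.of_injective (fun x ↦ (⟨x.1, x.2⟩ : H)) fun _ _ h ↦ Subtype.ext (Subtype.ext congr($h.1))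

theorem relIndex_le_index_mul_relIndex_inf {H K L : Subgroup G} (hL : L.index ≠ 0)
    (hHKL : H ≤ K ⊓ L) : H.relIndex K ≤ L.index * H.relIndex (K ⊓ L) := by
  rw [← relIndex_mul_relIndex H (K ⊓ L) K hHKL inf_le_left, inf_relIndex_left, mul_comm]
  gcongr
  rw [← relIndex_top_right] at hL ⊢
  exact relIndex_le_of_le_right le_top hL

end Subgroup

open Subgroup

section

variable {Γ : Type*} [Group Γ] {J : ℕ}

theorem WeakJordanBound.of_jordanBound (h : JordanBound Γ J) : WeakJordanBound Γ J := by
  intro G hG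
  obtain ⟨A, hAG, hA, -, hAJ⟩ := h G hG
  exact ⟨A, hAG, hA, hAJ⟩

theorem JordanGroup.weakJordanBound_weakJordanConst (h : JordanGroup Γ) :
    WeakJordanBound Γ (weakJordanConst Γ) :=
  Nat.sInf_mem (s := {J | WeakJordanBound Γ J}) (h.imp fun _ ↦ .of_jordanBound)

theorem JordanBound.of_weakJordanBound (h : WeakJordanBound Γ J) : JordanBound Γ J ! := by
  intro G hG
  obtain ⟨A, hAG, _, hAJ⟩ := h G hG
  set N := (A.subgroupOf G).normalCore
  have hN : (N.map G.subtype).subgroupOf G = N :=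
    comap_map_eq_self_of_injective G.subtype_injective N
  have : IsMulCommutative N := isMulCommutative_of_le (normalCore_le _)
  refine ⟨N.map G.subtype, map_subtype_le N, inferInstance, ?_, ?_⟩
  · rw [hN]
    exact normalCore_normal _
  rw [relIndex, hN]
  calc N.index ≤ (A.subgroupOf G).index ! := index_normalCore_le_factorial _
    _ ≤ J ! := Nat.factorial_le hAJ

theorem WeakJordanBound.of_subgroup (Γ₁ : Subgroup Γ) (hΓ₁ : Γ₁.index ≠ 0)
    (h : WeakJordanBound Γ₁ J) : WeakJordanBound Γ (Γ₁.index * J) := by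
  intro G hG
  obtain ⟨A, hAG, _, hAJ⟩ := h (G.subgroupOf Γ₁) inferInstance
  have hAG' : A.map Γ₁.subtype ≤ G ⊓ Γ₁ := subgroupOf_map_subtype G Γ₁ ▸ map_mono hAG
  refine ⟨A.map Γ₁.subtype, hAG'.trans inf_le_left, inferInstance, ?_⟩
  calc (A.map Γ₁.subtype).relIndex G ≤ Γ₁.index * (A.map Γ₁.subtype).relIndex (G ⊓ Γ₁) :=
        relIndex_le_index_mul_relIndex_inf hΓ₁ hAG'
    _ = Γ₁.index * A.relIndex (G.subgroupOf Γ₁) := by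
        rw [← subgroupOf_map_subtype, relIndex_map_map_of_injective _ _ Γ₁.subtype_injective]
    _ ≤ Γ₁.index * J := by gcongr

end

theorem weakJordan_of_finiteIndex_subgroup {Γ₂ : Type*} [Group Γ₂] (Γ₁ : Subgroup Γ₂)
    (hfin : Γ₁.index ≠ 0) (hJ : JordanGroup Γ₁) :
    JordanGroup Γ₂ ∧ weakJordanConst Γ₂ ≤ Γ₁.index * weakJordanConst Γ₁ := by
  have hweak := WeakJordanBound.of_subgroup Γ₁ hfin hJ.weakJordanBound_weakJordanConst
  exact ⟨⟨_, .of_weakJordanBound hweak⟩, Nat.sInf_le hweak⟩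
end

section
/- If there is a surjective group homomorphism Γ₁ → Γ₂ with finite kernel and Γ₁ is Jordan, then Γ₂ is Jordan, and moreover J̄(Γ₁) ≥ J̄(Γ₂) and J(Γ₁) ≥ J(Γ₂). -/
/-- The Jordan constant: the least Jordan bound. -/
noncomputable def jordanConst (Γ : Type*) [Group Γ] : ℕ :=
  sInf {J | JordanBound Γ J}

/-!
A finite subgroup `G` of `Γ₂` is the image of its preimage `H = φ⁻¹(G)`, which is finite because
`φ` has finite kernel. If `A ≤ H` is an abelian subgroup of index at most `J` (normal in `H`), then
`φ(A) ≤ G` is abelian, of index at most `J`, and normal in `G`. Hence every (weak) Jordan bound of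
`Γ₁` is one of `Γ₂`, and the least bounds compare accordingly.
-/

namespace Subgroup

variable {G N : Type*} [Group G] [Group N]

theorem finite_comap_of_finite_ker (f : G →* N) [Finite f.ker] (H : Subgroup N) [Finite H] :
    Finite (H.comap f) := by
  rw [(f.domRestrict (H.comap f)).finite_iff_finite_ker_range, MonoidHom.ker_domRestrict,
    MonoidHom.domRestrict_range]
  exact ⟨(subgroupOfEquivOfLe (f.ker_le_comap H)).finite_iff.mpr inferInstance,
    Finite.of_injective _ (inclusion_injective (map_comap_le f H))⟩

theorem relIndex_map_map_le (f : G →* N) {A H : Subgroup G} (h : A.relIndex H ≠ 0) :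
    (A.map f).relIndex (H.map f) ≤ A.relIndex H := by
  rw [← relIndex_comap]
  exact relIndex_le_of_le_left (le_comap_map f A) h

theorem Normal.map_subgroupOf (f : G →* N) {A H : Subgroup G} (hle : A ≤ H)
    (hA : (A.subgroupOf H).Normal) : ((A.map f).subgroupOf (H.map f)).Normal := by
  rw [normal_subgroupOf_iff_le_normalizer (map_mono hle)]
  exact (map_mono ((normal_subgroupOf_iff_le_normalizer hle).mp hA)).trans (le_normalizer_map f)

end Subgroup

theorem JordanBound.weakJordanBound {Γ : Type*} [Group Γ] {J : ℕ} (h : JordanBound Γ J) :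
    WeakJordanBound Γ J := fun G hG =>
  let ⟨A, hle, hA, _, hidx⟩ := h G hG
  ⟨A, hle, hA, hidx⟩

section Surjective

open Subgroup

variable {Γ₁ Γ₂ : Type*} [Group Γ₁] [Group Γ₂] (φ : Γ₁ →* Γ₂) [Finite φ.ker] {J : ℕ}

theorem WeakJordanBound.of_surjective (hφ : Function.Surjective φ) (h : WeakJordanBound Γ₁ J) :
    WeakJordanBound Γ₂ J := by
  intro G hG
  have hH := finite_comap_of_finite_ker φ G
  obtain ⟨A, hle, hA, hidx⟩ := h _ hH
  rw [← map_comap_eq_self_of_surjective hφ G]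
  exact ⟨A.map φ, map_mono hle, inferInstance,
    (relIndex_map_map_le φ index_ne_zero_of_finite).trans hidx⟩

theorem JordanBound.of_surjective (hφ : Function.Surjective φ) (h : JordanBound Γ₁ J) :
    JordanBound Γ₂ J := by
  intro G hG
  have hH := finite_comap_of_finite_ker φ G
  obtain ⟨A, hle, hA, hnormal, hidx⟩ := h _ hH
  rw [← map_comap_eq_self_of_surjective hφ G]
  exact ⟨A.map φ, map_mono hle, inferInstance, hnormal.map_subgroupOf φ hle,
    (relIndex_map_map_le φ index_ne_zero_of_finite).trans hidx⟩

end Surjective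

theorem jordan_of_surjective_finite_kernel {Γ₁ Γ₂ : Type*} [Group Γ₁] [Group Γ₂]
    (φ : Γ₁ →* Γ₂) (hsurj : Function.Surjective φ) (hker : Finite φ.ker)
    (hJ : JordanGroup Γ₁) :
    JordanGroup Γ₂ ∧ weakJordanConst Γ₂ ≤ weakJordanConst Γ₁ ∧
      jordanConst Γ₂ ≤ jordanConst Γ₁ := by
  obtain ⟨J, hJ⟩ := hJ
  refine ⟨⟨J, hJ.of_surjective φ hsurj⟩, ?_, ?_⟩
  · exact csInf_le_csInf (OrderBot.bddBelow _) ⟨J, hJ.weakJordanBound⟩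
      fun _ => WeakJordanBound.of_surjective φ hsurj
  · exact csInf_le_csInf (OrderBot.bddBelow _) ⟨J, hJ⟩ fun _ => JordanBound.of_surjective φ hsurj
end

section
/- Every nontrivial finite abelian subgroup of PGL₃(ℂ) can be generated by at most three elements. -/
/-- The projective general linear group `PGL m ℂ`. -/
abbrev PGL (m : ℕ) : Type :=
  Matrix.GeneralLinearGroup (Fin m) ℂ ⧸ Subgroup.center (Matrix.GeneralLinearGroup (Fin m) ℂ)

/-!
Lift `B` to its preimage `H` in `SL₃(ℂ)`, a finite group (the kernel is `μ₃`) whose commutators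
are central. If `H` is commutative, it acts faithfully on `ℂ³` by commuting semisimple matrices,
so `ℂ³` splits into at most three joint eigenspaces and the eigencharacters embed `H` into
`(ℂˣ)³`. Otherwise pick `P, Q ∈ H` with `PQ = ω QP`, `ω ≠ 1`: then `ω` is a primitive cube root
of unity, `Q` permutes the eigenlines of `P` cyclically, and a matrix commuting with both `P`
and `Q` is scalar; so `x ↦ (⁅x, P⁆, ⁅x, Q⁆)` maps `H` into `(ℂˣ)²` with kernel the scalars. In
both cases a homomorphism to `(ℂˣ)ⁿ`, `n ≤ 3`, whose kernel dies in `B`, bounds the number of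
generators of `B` by `n`: finite subgroups of `ℂˣ` are cyclic, so one generator per coordinate
suffices.
-/

open Module Module.End Matrix Polynomial
open scoped commutatorElement

universe u v

section Generation

variable {G K : Type*} [Group G] [Finite G] [CommRing K] [IsDomain K]

theorem Subgroup.exists_le_zpowers_sup_inf_ker (N : Subgroup G) (ψ : G →* Kˣ) :
    ∃ h ∈ N, N ≤ zpowers h ⊔ (N ⊓ ψ.ker) := by
  have : Finite (N.map ψ) := Finite.of_surjective _ (ψ.subgroupMap_surjective N)
  obtain ⟨u, hu⟩ := (N.map ψ).isCyclic_iff_exists_zpowers_eq_top.mp inferInstance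
  obtain ⟨h, hN, rfl⟩ := mem_map.mp (hu ▸ mem_zpowers u)
  refine ⟨h, hN, fun n hn => ?_⟩
  obtain ⟨m, hm⟩ := mem_zpowers_iff.mp (hu ▸ mem_map_of_mem ψ hn)
  have hker : h ^ (-m) * n ∈ N ⊓ ψ.ker := ⟨mul_mem (zpow_mem hN _) hn, by simp [← hm]⟩
  simpa using mul_mem_sup (zpow_mem_zpowers h m) hker

theorem exists_finset_card_le_closure_sup_iInf_ker_eq_top {ι : Type*} (ψ : ι → G →* Kˣ)
    (s : Finset ι) :
    ∃ S : Finset G, S.card ≤ s.card ∧ Subgroup.closure (S : Set G) ⊔ ⨅ i ∈ s, (ψ i).ker = ⊤ := by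
  classical
  induction s using Finset.induction_on with
  | empty => exact ⟨∅, by simp, by simp⟩
  | insert i s hi ih =>
    obtain ⟨S, hS, hcl⟩ := ih
    set M := ⨅ j ∈ s, (ψ j).ker
    obtain ⟨h, -, hM⟩ := M.exists_le_zpowers_sup_inf_ker (ψ i)
    refine ⟨insert h S, (Finset.card_insert_le _ _).trans (by simp [hi, hS]), top_le_iff.mp ?_⟩
    rw [← hcl, Finset.iInf_insert]
    calc Subgroup.closure (S : Set G) ⊔ M
        ≤ Subgroup.closure (S : Set G) ⊔ (Subgroup.zpowers h ⊔ (M ⊓ (ψ i).ker)) :=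
          sup_le_sup_left hM _
      _ ≤ Subgroup.closure (insert h S : Finset G) ⊔ ((ψ i).ker ⊓ M) := by
          rw [inf_comm, ← sup_assoc]
          refine sup_le_sup_right (sup_le (Subgroup.closure_mono (by simp)) ?_) _
          exact Subgroup.zpowers_le.mpr (Subgroup.subset_closure (by simp))

theorem MonoidHom.exists_finset_card_le_closure_eq_range {Q ι : Type*} [Group Q] [Finite ι]
    (f : G →* Q) (ψ : ι → G →* Kˣ) (hψ : ⨅ i, (ψ i).ker ≤ f.ker) :
    ∃ S : Finset Q, S.card ≤ Nat.card ι ∧ Subgroup.closure (S : Set Q) = f.range := by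
  classical
  have := Fintype.ofFinite ι
  obtain ⟨S, hS, hcl⟩ := exists_finset_card_le_closure_sup_iInf_ker_eq_top ψ Finset.univ
  refine ⟨S.image f, Finset.card_image_le.trans (by simpa [Nat.card_eq_fintype_card] using hS), ?_⟩
  simp only [Finset.mem_univ, iInf_true] at hcl
  rw [Finset.coe_image, ← MonoidHom.map_closure, MonoidHom.range_eq_map, ← hcl, Subgroup.map_sup,
    (Subgroup.map_eq_bot_iff _).mpr hψ, sup_bot_eq]

end Generation

theorem Subgroup.finite_comap {G Q : Type*} [Group G] [Group Q] (π : G →* Q) [Finite π.ker]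
    (B : Subgroup Q) [Finite B] : Finite (B.comap π) := by
  refine ((π.comp (B.comap π).subtype).finite_iff_finite_ker_range).mpr ⟨?_, ?_⟩
  · exact Finite.of_injective (fun x => (⟨x.1.1, x.2⟩ : π.ker))
      fun x y h => Subtype.ext (Subtype.ext (by simpa using congrArg Subtype.val h))
  · have hle : (π.comp (B.comap π).subtype).range ≤ B := by
      rintro _ ⟨x, rfl⟩
      exact x.2
    exact Finite.of_injective _ (Subgroup.inclusion_injective hle)

theorem commutatorElement_mem_ker_of_mem_comap {G Q : Type*} [Group G] [Group Q] {π : G →* Q}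
    {B : Subgroup Q} [IsMulCommutative B] {x y : G} (hx : x ∈ B.comap π) (hy : y ∈ B.comap π) :
    ⁅x, y⁆ ∈ π.ker := by
  rw [MonoidHom.mem_ker, map_commutatorElement, commutatorElement_eq_one_iff_mul_comm]
  exact setLike_mul_comm (s := B) hx hy

theorem Module.End.isSemisimple_of_pow_eq_one {K V : Type*} [Field K] [AddCommGroup V]
    [Module K V] {f : End K V} {n : ℕ} (hf : f ^ n = 1) (hn : (n : K) ≠ 0) : f.IsSemisimple :=
  isSemisimple_of_squarefree_aeval_eq_zero (separable_X_pow_sub_C 1 hn one_ne_zero).squarefree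
    (by simp [hf])

namespace Representation

variable {K G V : Type*} [Field K] [Group G] [AddCommGroup V] [Module K V]
  (ρ : Representation K G V)

def jointEigenspace (χ : G → K) : Submodule K V := ⨅ g, eigenspace (ρ g) (χ g)

theorem apply_eq_smul_of_mem_jointEigenspace {χ : G → K} {v : V}
    (hv : v ∈ ρ.jointEigenspace χ) (g : G) : ρ g v = χ g • v :=
  mem_eigenspace_iff.mp (Submodule.mem_iInf _ |>.mp hv g)

theorem map_mul_of_jointEigenspace_ne_bot {χ : G → K} (hχ : ρ.jointEigenspace χ ≠ ⊥) (g h : G) :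
    χ (g * h) = χ g * χ h := by
  obtain ⟨v, hv, hv0⟩ := Submodule.exists_mem_ne_zero_of_ne_bot hχ
  refine smul_left_injective K hv0 ?_
  simp only [← ρ.apply_eq_smul_of_mem_jointEigenspace hv, map_mul, Module.End.mul_apply]
  rw [ρ.apply_eq_smul_of_mem_jointEigenspace hv h, map_smul,
    ρ.apply_eq_smul_of_mem_jointEigenspace hv g, smul_smul, mul_comm]

theorem map_one_of_jointEigenspace_ne_bot {χ : G → K} (hχ : ρ.jointEigenspace χ ≠ ⊥) :
    χ 1 = 1 := by
  obtain ⟨v, hv, hv0⟩ := Submodule.exists_mem_ne_zero_of_ne_bot hχ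
  refine smul_left_injective K hv0 ?_
  simp [← ρ.apply_eq_smul_of_mem_jointEigenspace hv]

def eigencharacter (χ : G → K) (hχ : ρ.jointEigenspace χ ≠ ⊥) : G →* Kˣ :=
  MonoidHom.toHomUnits
    { toFun := χ
      map_one' := ρ.map_one_of_jointEigenspace_ne_bot hχ
      map_mul' := ρ.map_mul_of_jointEigenspace_ne_bot hχ }

theorem isSemisimple_apply [CharZero K] [Finite G] (g : G) : IsSemisimple (ρ g) :=
  isSemisimple_of_pow_eq_one (by rw [← map_pow, pow_card_eq_one', map_one])
    (Nat.cast_ne_zero.mpr Nat.card_pos.ne')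

theorem jointEigenspace_eq_iInf_maxGenEigenspace [CharZero K] [Finite G] :
    ρ.jointEigenspace = fun χ => ⨅ g, maxGenEigenspace (ρ g) (χ g) := by
  ext1 χ
  simp only [jointEigenspace,
    ((ρ.isSemisimple_apply _).isFinitelySemisimple).maxGenEigenspace_eq_eigenspace]

theorem commute_apply [IsMulCommutative G] (g h : G) : Commute (ρ g) (ρ h) := by
  rw [Commute, SemiconjBy, ← map_mul, ← map_mul, mul_comm']

variable [CharZero K] [Finite G] [IsMulCommutative G]

theorem iSupIndep_jointEigenspace : iSupIndep ρ.jointEigenspace := by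
  rw [jointEigenspace_eq_iInf_maxGenEigenspace]
  exact independent_iInf_maxGenEigenspace_of_forall_mapsTo _
    fun g h μ => mapsTo_maxGenEigenspace_of_comm (ρ.commute_apply h g) μ

theorem iSup_jointEigenspace_eq_top [IsAlgClosed K] [FiniteDimensional K V] :
    ⨆ χ, ρ.jointEigenspace χ = ⊤ := by
  rw [jointEigenspace_eq_iInf_maxGenEigenspace]
  exact iSup_iInf_maxGenEigenspace_eq_top_of_iSup_maxGenEigenspace_eq_top_of_commute _
    (fun g h _ => ρ.commute_apply g h) fun g => iSup_maxGenEigenspace_eq_top _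

variable [FiniteDimensional K V]

theorem finite_jointEigenspace_ne_bot : Finite {χ // ρ.jointEigenspace χ ≠ ⊥} :=
  have := ρ.iSupIndep_jointEigenspace.fintypeNeBotOfFiniteDimensional
  inferInstance

theorem natCard_jointEigenspace_ne_bot_le :
    Nat.card {χ // ρ.jointEigenspace χ ≠ ⊥} ≤ finrank K V := by
  have := ρ.iSupIndep_jointEigenspace.fintypeNeBotOfFiniteDimensional
  rw [Nat.card_eq_fintype_card]
  exact ρ.iSupIndep_jointEigenspace.subtype_ne_bot_le_finrank

theorem iInf_ker_eigencharacter_eq_bot [IsAlgClosed K] (hρ : Function.Injective ρ) :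
    ⨅ χ : {χ // ρ.jointEigenspace χ ≠ ⊥}, (ρ.eigencharacter χ χ.2).ker = ⊥ := by
  refine eq_bot_iff.mpr fun g hg => hρ ?_
  have hχg (χ : G → K) (hχ : ρ.jointEigenspace χ ≠ ⊥) : χ g = 1 :=
    congrArg Units.val (Subgroup.mem_iInf.mp hg ⟨χ, hχ⟩)
  suffices ⊤ ≤ LinearMap.ker (ρ g - 1) by
    rw [map_one, ← sub_eq_zero, ← LinearMap.ker_eq_top]
    exact top_le_iff.mp this
  rw [← ρ.iSup_jointEigenspace_eq_top]
  refine iSup_le fun χ => ?_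
  rcases eq_or_ne (ρ.jointEigenspace χ) ⊥ with hχ | hχ
  · simp [hχ]
  · intro v hv
    simp [ρ.apply_eq_smul_of_mem_jointEigenspace hv, hχg χ hχ]

end Representation

theorem Module.End.pow_apply_mem_eigenspace_of_mul_eq_smul_mul {R V : Type*} [CommRing R]
    [AddCommGroup V] [Module R V] {X Y : End R V} {ω μ : R} (hXY : Y * X = ω • (X * Y)) {v : V}
    (hv : v ∈ Y.eigenspace μ) (k : ℕ) : (X ^ k) v ∈ Y.eigenspace (ω ^ k * μ) := by
  induction k with
  | zero => simpa using hv
  | succ k ih =>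
    rw [mem_eigenspace_iff] at ih ⊢
    rw [pow_succ', mul_apply, ← mul_apply Y, hXY, LinearMap.smul_apply, mul_apply, ih, map_smul,
      smul_smul, pow_succ']
    ring_nf

section Heisenberg

variable {K V : Type*} [Field K] [AddCommGroup V] [Module K V] {X Y : End K V} {ω : K}

theorem Module.End.linearIndependent_pow_apply_of_mul_eq_smul_mul {n : ℕ}
    (hω : IsPrimitiveRoot ω n) (hX : IsUnit X) (hY : IsUnit Y) (hXY : Y * X = ω • (X * Y))
    {μ : K} {v : V} (hv : Y.HasEigenvector μ v) :
    LinearIndependent K fun k : Fin n => (X ^ (k : ℕ)) v := by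
  have hμ0 : μ ≠ 0 := by
    rintro rfl
    exact hv.2 (((isUnit_iff Y).mp hY).injective (by simpa using hv.apply_eq_smul))
  refine eigenvectors_linearIndependent' Y (fun k : Fin n => ω ^ (k : ℕ) * μ) ?_ _ fun k =>
    ⟨pow_apply_mem_eigenspace_of_mul_eq_smul_mul hXY hv.1 k, ?_⟩
  · exact fun i j hij => Fin.ext (hω.pow_inj i.2 j.2 (mul_right_cancel₀ hμ0 hij))
  · exact fun h => hv.2 (((isUnit_iff _).mp (hX.pow k)).injective (by simpa using h))

theorem Module.End.exists_eq_algebraMap_of_commute_of_mul_eq_smul_mul [IsAlgClosed K]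
    [FiniteDimensional K V] {n : ℕ} (hω : IsPrimitiveRoot ω n) (hV : finrank K V = n)
    {Z : End K V} (hX : IsUnit X) (hY : IsUnit Y) (hXY : Y * X = ω • (X * Y))
    (hZX : Commute Z X) (hZY : Commute Z Y) : ∃ c, Z = algebraMap K _ c := by
  rcases subsingleton_or_nontrivial V with _ | _
  · exact ⟨0, Subsingleton.elim _ _⟩
  obtain ⟨c, hc⟩ := Z.exists_eigenvalue
  set E := Z.eigenspace c
  have hYE : Set.MapsTo Y E E := mapsTo_genEigenspace_of_comm hZY c 1
  have : Nontrivial E := Submodule.nontrivial_iff_ne_bot.mpr hc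
  -- an eigenvector of `Y` inside `E`; its `X`-translates then span `V`
  obtain ⟨μ, hμ⟩ := exists_eigenvalue (Y.restrict hYE)
  obtain ⟨⟨v, hvE⟩, hv⟩ := hμ.exists_hasEigenvector
  have hvY : Y.HasEigenvector μ v :=
    ⟨mem_eigenspace_iff.mpr (congrArg Subtype.val (mem_eigenspace_iff.mp hv.1)),
      fun h => hv.2 (Subtype.ext h)⟩
  have hind := linearIndependent_pow_apply_of_mul_eq_smul_mul hω hX hY hXY hvY
  have hE : E = ⊤ := by
    refine Submodule.eq_top_of_finrank_eq (le_antisymm (Submodule.finrank_le E) ?_)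
    calc finrank K V
        = finrank K (Submodule.span K (Set.range fun k : Fin n => (X ^ (k : ℕ)) v)) := by
          rw [finrank_span_eq_card hind, Fintype.card_fin, hV]
      _ ≤ finrank K E := Submodule.finrank_mono <| Submodule.span_le.mpr <|
          Set.range_subset_iff.mpr fun k => mapsTo_genEigenspace_of_comm (hZX.pow_right k) c 1 hvE
  refine ⟨c, LinearMap.ext fun w => ?_⟩
  rw [algebraMap_end_apply]
  exact mem_eigenspace_iff.mp (hE ▸ Submodule.mem_top : w ∈ E)

end Heisenberg

def Subgroup.commutatorHom {G : Type*} [Group G] (H : Subgroup G) (y : G)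
    (hy : ∀ x ∈ H, ⁅x, y⁆ ∈ Subgroup.center G) : H →* Subgroup.center G where
  toFun x := ⟨⁅(x : G), y⁆, hy x x.2⟩
  map_one' := by ext; simp
  map_mul' x x' := by
    ext
    change ⁅(x : G) * x', y⁆ = ⁅(x : G), y⁆ * ⁅(x' : G), y⁆
    have hc := Subgroup.mem_center_iff.mp (hy x' x'.2)
    rw [commutatorElement_mul_left_eq_conj_mul, hc, mul_inv_cancel_right]
    exact (hc _).symm

theorem Subgroup.commutatorHom_eq_one_iff {G : Type*} [Group G] {H : Subgroup G} {y : G}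
    {hy : ∀ x ∈ H, ⁅x, y⁆ ∈ Subgroup.center G} {x : H} :
    H.commutatorHom y hy x = 1 ↔ Commute (x : G) y := by
  rw [← commutatorElement_eq_one_iff_commute, Subtype.ext_iff]
  rfl

namespace Matrix.SpecialLinearGroup

theorem toPGL_surjective {n K : Type*} [Fintype n] [DecidableEq n] [Nonempty n] [Field K]
    [IsAlgClosed K] : Function.Surjective (toPGL (n := n) (R := K)) := by
  have hroots (r : Kˣ) : ∃ k : Kˣ, k ^ Fintype.card n = r := by
    obtain ⟨z, hz⟩ := IsAlgClosed.exists_pow_nat_eq (r : K) (Fintype.card_pos (α := n))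
    have hz0 : z ≠ 0 := by
      rintro rfl
      exact r.ne_zero (by simpa [zero_pow (Fintype.card_pos (α := n)).ne'] using hz.symm)
    exact ⟨Units.mk0 z hz0, Units.ext (by simpa using hz)⟩
  intro g
  obtain ⟨x, hx⟩ := ProjectiveSpecialLinearGroup.toPGL_surj_of_roots hroots g
  induction x using QuotientGroup.induction_on with | H x => exact ⟨x, hx⟩

theorem finite_center {n K : Type*} [Fintype n] [DecidableEq n] [CommRing K] [IsDomain K] :
    Finite (Subgroup.center (SpecialLinearGroup n K)) :=
  have : NeZero (max (Fintype.card n) 1) := ⟨(lt_max_of_lt_right one_pos).ne'⟩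
  Finite.of_equiv _ center_equiv_rootsOfUnity.symm.toEquiv

variable {p : ℕ} [hp : Fact p.Prime] {K : Type*} [Field K] [IsAlgClosed K]

theorem mem_center_of_commute_of_not_commute {P Q Z : SpecialLinearGroup (Fin p) K}
    (hPQ : ⁅P, Q⁆ ∈ Subgroup.center _) (hnc : ¬ Commute P Q) (hZP : Commute Z P)
    (hZQ : Commute Z Q) : Z ∈ Subgroup.center _ := by
  obtain ⟨ω, hωp, hω⟩ := mem_center_iff.mp hPQ
  rw [Fintype.card_fin] at hωp
  have hω1 : ω ≠ 1 := by
    rintro rfl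
    refine hnc (commutatorElement_eq_one_iff_commute.mp (Subtype.ext ?_))
    simp [← hω]
  have hprim : IsPrimitiveRoot ω p := isPrimitiveRoot_of_mem_nthRootsFinset hp.out
    ((mem_nthRootsFinset hp.out.pos 1).mpr hωp) hω1
  have hPQ' : (P * Q : Matrix (Fin p) (Fin p) K) = ω • (Q * P) := by
    have : P * Q = ⁅P, Q⁆ * (Q * P) := by group
    rw [← coe_mul, ← coe_mul, this, coe_mul, ← hω]
    simp [Matrix.smul_eq_diagonal_mul]
  let e := Matrix.toLinAlgEquiv' (R := K) (n := Fin p)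
  have hunit (A : SpecialLinearGroup (Fin p) K) : IsUnit (e A) :=
    (isUnit_iff_isUnit_det _ |>.mpr (by simp)).map e
  have hcomm {A B : SpecialLinearGroup (Fin p) K} (h : Commute A B) : Commute (e A) (e B) :=
    (show Commute (A : Matrix (Fin p) (Fin p) K) B by
      simpa only [Commute, SemiconjBy, coe_mul] using congrArg Subtype.val h.eq).map e
  obtain ⟨c, hc⟩ := exists_eq_algebraMap_of_commute_of_mul_eq_smul_mul hprim
    (Module.finrank_fin_fun K) (hunit Q) (hunit P) (by rw [← map_mul, ← map_mul, hPQ', map_smul])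
    (hcomm hZQ) (hcomm hZP)
  have hZ : (Z : Matrix (Fin p) (Fin p) K) = algebraMap K _ c :=
    e.injective (by rw [hc, e.commutes])
  refine Subgroup.mem_center_iff.mpr fun g => Subtype.ext ?_
  rw [coe_mul, coe_mul, hZ, Algebra.commutes]

theorem exists_iInf_ker_eq_bot_of_isMulCommutative {n : Type u} {K : Type v} [Fintype n]
    [DecidableEq n] [Field K] [IsAlgClosed K] [CharZero K] (H : Subgroup (SpecialLinearGroup n K))
    [Finite H] [IsMulCommutative H] :
    ∃ (ι : Type (max u v)) (_ : Finite ι), Nat.card ι ≤ Fintype.card n ∧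
      ∃ ψ : ι → H →* Kˣ, ⨅ i, (ψ i).ker = ⊥ := by
  let ρ : Representation K H (n → K) := (MonoidHomClass.toMonoidHom Matrix.toLinAlgEquiv').comp
    (coeMonoidHom.comp H.subtype)
  have hρ : Function.Injective ρ := Matrix.toLinAlgEquiv'.injective.comp
    (coeMonoidHom_injective.comp Subtype.val_injective)
  exact ⟨_, ρ.finite_jointEigenspace_ne_bot,
    by simpa using ρ.natCard_jointEigenspace_ne_bot_le, _, ρ.iInf_ker_eigencharacter_eq_bot hρ⟩

theorem exists_iInf_ker_le_center_of_not_commute (H : Subgroup (SpecialLinearGroup (Fin p) K))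
    (hH : ∀ x ∈ H, ∀ y ∈ H, ⁅x, y⁆ ∈ Subgroup.center _) {P Q : SpecialLinearGroup (Fin p) K}
    (hP : P ∈ H) (hQ : Q ∈ H) (hnc : ¬ Commute P Q) :
    ∃ ψ : Fin 2 → H →* Kˣ, ⨅ i, (ψ i).ker ≤ (Subgroup.center _).comap H.subtype := by
  let toUnits : Subgroup.center (SpecialLinearGroup (Fin p) K) →* Kˣ :=
    (rootsOfUnity _ K).subtype.comp (center_equiv_rootsOfUnity' ⟨0, hp.out.pos⟩).toMonoidHom
  have hinj : Function.Injective toUnits :=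
    Subtype.val_injective.comp (center_equiv_rootsOfUnity' _).injective
  have hmem : ∀ i, ![P, Q] i ∈ H := by simp [Fin.forall_fin_two, hP, hQ]
  refine ⟨fun i => toUnits.comp (H.commutatorHom (![P, Q] i) fun x hx => hH x hx _ (hmem i)), ?_⟩
  intro x hx
  have hcomm (i : Fin 2) : Commute (x : SpecialLinearGroup (Fin p) K) (![P, Q] i) :=
    Subgroup.commutatorHom_eq_one_iff.mp
      (hinj ((Subgroup.mem_iInf.mp hx i).trans toUnits.map_one.symm))
  exact mem_center_of_commute_of_not_commute (hH P hP Q hQ) hnc (hcomm 0) (hcomm 1)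

end Matrix.SpecialLinearGroup

theorem abelian_subgroup_PGL3_three_generators_general
    (B : Subgroup (PGL 3)) (hfin : Finite B) (hcomm : IsMulCommutative B) :
    ∃ S : Finset (PGL 3), S.card ≤ 3 ∧ Subgroup.closure (S : Set (PGL 3)) = B := by
  let π : SpecialLinearGroup (Fin 3) ℂ →* PGL 3 := SpecialLinearGroup.toPGL
  have hker : π.ker = Subgroup.center _ := SpecialLinearGroup.toPGL_ker
  let H := B.comap π
  have : Finite π.ker := hker ▸ SpecialLinearGroup.finite_center
  have : Finite H := Subgroup.finite_comap π B
  suffices ∃ (ι : Type) (_ : Finite ι), Nat.card ι ≤ 3 ∧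
      ∃ ψ : ι → H →* ℂˣ, ⨅ i, (ψ i).ker ≤ (Subgroup.center _).comap H.subtype by
    obtain ⟨ι, _, hι, ψ, hψ⟩ := this
    obtain ⟨S, hS, hcl⟩ := (π.comp H.subtype).exists_finset_card_le_closure_eq_range ψ
      (by rwa [← MonoidHom.comap_ker, hker])
    refine ⟨S, hS.trans hι, hcl.trans ?_⟩
    rw [MonoidHom.range_comp, Subgroup.range_subtype]
    exact Subgroup.map_comap_eq_self_of_surjective SpecialLinearGroup.toPGL_surjective B
  by_cases hnc : ∃ P ∈ H, ∃ Q ∈ H, ¬ Commute P Q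
  · obtain ⟨P, hP, Q, hQ, hPQ⟩ := hnc
    obtain ⟨ψ, hψ⟩ := SpecialLinearGroup.exists_iInf_ker_le_center_of_not_commute H
      (fun x hx y hy => hker ▸ commutatorElement_mem_ker_of_mem_comap hx hy) hP hQ hPQ
    exact ⟨Fin 2, inferInstance, by simp, ψ, hψ⟩
  · push Not at hnc
    have : IsMulCommutative H := .of_comm fun x y => Subtype.ext (hnc x x.2 y y.2).eq
    obtain ⟨ι, _, hι, ψ, hψ⟩ := SpecialLinearGroup.exists_iInf_ker_eq_bot_of_isMulCommutative H
    exact ⟨ι, ‹_›, by simpa using hι, ψ, hψ.trans_le bot_le⟩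

theorem abelian_subgroup_PGL3_three_generators
    (B : Subgroup (PGL 3)) (hfin : Finite B) (hcomm : IsMulCommutative B)
    (hnt : B ≠ ⊥) :
    ∃ S : Finset (PGL 3), S.card ≤ 3 ∧ Subgroup.closure (S : Set (PGL 3)) = B :=
  abelian_subgroup_PGL3_three_generators_general B hfin hcomm
end

section
/- Let p be a prime and G a group of order pⁿ, and let p^a be the maximal order of an abelian normal subgroup of G. Then 2n ≤ a(a+1). -/
/-!
Let `A` be an abelian normal subgroup of maximal order. It is self-centralizing: otherwise
`C(A)/A` is a nontrivial normal subgroup of the `p`-group `G/A`, so it contains a central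
element `xA`, and `A ⊔ ⟨x⟩` would be a larger abelian normal subgroup.

Now climb from `1` to `A` through normal subgroups `T < T ⊔ ⟨x⟩` with `x` central modulo `T`.
Conjugates of `x` by `C(T)` lie in the coset `T x`, so `|C(T) : C(T ⊔ ⟨x⟩)| ≤ |T|`. Along a
chain whose orders are `p ^ 0, p ^ 1, …, p ^ a` this gives
`|G| ≤ |C(A)| p ^ (0 + 1 + ⋯ + (a - 1)) = p ^ (a (a + 1) / 2)`.
-/

open Subgroup MulAction
open scoped commutatorElement

section

variable {G : Type*} [Group G]

namespace Subgroup

theorem card_lt_card_of_lt [Finite G] {H K : Subgroup G} (h : H < K) :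
    Nat.card H < Nat.card K :=
  (card_le_of_le h.le).lt_of_ne fun he => h.ne (eq_of_le_of_card_ge h.le he.ge)

theorem normal_sup_zpowers_of_commutator_mem {T : Subgroup G} [T.Normal] {x : G}
    (hx : ∀ g : G, ⁅g, x⁆ ∈ T) : (T ⊔ zpowers x).Normal := by
  refine ⟨fun y hy g => ?_⟩
  suffices T ⊔ zpowers x ≤ (T ⊔ zpowers x).comap (MulAut.conj g).toMonoidHom from this hy
  refine sup_le (fun t ht => mem_sup_left (Normal.conj_mem inferInstance t ht g)) ?_
  rw [zpowers_le]
  show g * x * g⁻¹ ∈ T ⊔ zpowers x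
  rw [show g * x * g⁻¹ = ⁅g, x⁆ * x by group]
  exact mul_mem (mem_sup_left (hx g)) (mem_sup_right (mem_zpowers x))

theorem centralizer_inf_centralizer_le_centralizer_sup (H : Subgroup G) (x : G) :
    centralizer (H : Set G) ⊓ centralizer {x} ≤
      centralizer ((H ⊔ zpowers x : Subgroup G) : Set G) := by
  rw [le_centralizer_iff]
  exact sup_le (le_centralizer_iff.mp inf_le_left)
    (zpowers_le.mpr fun c hc => mem_centralizer_singleton_iff.mp (mem_inf.mp hc).2)

theorem relIndex_centralizer_singleton_le_card {H T : Subgroup G} [Finite T] {x : G}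
    (hx : ∀ h ∈ H, ⁅h, x⁆ ∈ T) : (centralizer {x}).relIndex H ≤ Nat.card T := by
  let _ : MulAction H G := MulAction.compHom G (MulAut.conj.comp H.subtype)
  have hstab : stabilizer H x = (centralizer {x}).subgroupOf H := by
    ext h
    simp [mem_stabilizer_iff, mem_subgroupOf, mem_centralizer_singleton_iff,
      MulAction.compHom_smul_def, mul_inv_eq_iff_eq_mul]
  have horbit : orbit H x ⊆ (· * x) '' (T : Set G) := by
    rintro _ ⟨h, rfl⟩
    refine ⟨⁅(h : G), x⁆, hx h h.2, ?_⟩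
    simp [commutatorElement_def, MulAction.compHom_smul_def]
  calc (centralizer {x}).relIndex H = Set.ncard (orbit H x) := by
        rw [relIndex, ← hstab, index_stabilizer]
    _ ≤ Set.ncard ((· * x) '' (T : Set G)) :=
        Set.ncard_le_ncard horbit ((T : Set G).toFinite.image _)
    _ ≤ Nat.card T :=
        (Set.ncard_image_le (T : Set G).toFinite).trans (Nat.card_coe_set_eq (T : Set G)).ge

theorem card_centralizer_le_card_centralizer_sup_zpowers_mul [Finite G] {T : Subgroup G} {x : G}
    (hx : ∀ g : G, ⁅g, x⁆ ∈ T) :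
    Nat.card (centralizer (T : Set G)) ≤
      Nat.card (centralizer ((T ⊔ zpowers x : Subgroup G) : Set G)) * Nat.card T :=
  calc Nat.card (centralizer (T : Set G))
      = Nat.card ↥(centralizer (T : Set G) ⊓ centralizer {x}) *
          (centralizer {x}).relIndex (centralizer (T : Set G)) := by
        rw [← inf_relIndex_left, ← relIndex_bot_left, ← relIndex_bot_left,
          relIndex_mul_relIndex _ _ _ bot_le inf_le_left]
    _ ≤ Nat.card (centralizer ((T ⊔ zpowers x : Subgroup G) : Set G)) * Nat.card T :=
        Nat.mul_le_mul (card_le_of_le (centralizer_inf_centralizer_le_centralizer_sup T x))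
          (relIndex_centralizer_singleton_le_card fun g _ => hx g)

end Subgroup

namespace IsPGroup

variable {p : ℕ} [hp : Fact p.Prime] [Finite G]

theorem exists_ne_one_mem_center_of_normal (hG : IsPGroup p G) {N : Subgroup G} [N.Normal]
    (hN : N ≠ ⊥) : ∃ z ∈ N, z ≠ 1 ∧ z ∈ center G := by
  have hdvd : p ∣ Nat.card N := by
    have : Nontrivial N := (nontrivial_iff_ne_bot N).mpr hN
    obtain ⟨k, hk, hcard⟩ := ((hG.to_subgroup N).nontrivial_iff_card).mp this
    exact hcard ▸ dvd_pow_self p hk.ne'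
  obtain ⟨z, hz, hz1⟩ :=
    (hG.of_equiv ConjAct.toConjAct).exists_fixed_point_of_prime_dvd_card_of_fixed_point
      N hdvd (a := 1) (fun g => smul_one g)
  refine ⟨z, z.2, fun h => hz1 (Subtype.ext h.symm), mem_center_iff.mpr fun g => ?_⟩
  have := congrArg Subtype.val (hz (ConjAct.toConjAct g))
  rw [ConjAct.Subgroup.val_conj_smul, ConjAct.toConjAct_smul] at this
  rw [← mul_inv_eq_iff_eq_mul]
  exact this

theorem exists_mem_notMem_forall_commutator_mem (hG : IsPGroup p G) {T N : Subgroup G}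
    [T.Normal] [N.Normal] (hTN : T < N) : ∃ x ∈ N, x ∉ T ∧ ∀ g : G, ⁅g, x⁆ ∈ T := by
  have hmap : N.map (QuotientGroup.mk' T) ≠ ⊥ := by
    obtain ⟨y, hyN, hyT⟩ := SetLike.exists_of_lt hTN
    exact ne_bot_iff_exists_ne_one.mpr ⟨⟨_, mem_map_of_mem _ hyN⟩, by simpa using hyT⟩
  have : (N.map (QuotientGroup.mk' T)).Normal :=
    Normal.map inferInstance _ (QuotientGroup.mk'_surjective T)
  obtain ⟨_, ⟨x, hxN, rfl⟩, hx1, hxc⟩ :=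
    (hG.to_quotient T).exists_ne_one_mem_center_of_normal hmap
  refine ⟨x, hxN, by simpa using hx1, fun g => ?_⟩
  have hc := mem_center_iff.mp hxc g
  rw [← QuotientGroup.eq_one_iff, commutatorElement_def]
  simp only [QuotientGroup.mk'_apply] at hc
  simp only [QuotientGroup.mk_mul, QuotientGroup.mk_inv, hc]
  group

theorem centralizer_le_self_of_forall_card_le (hG : IsPGroup p G) {A : Subgroup G} [A.Normal]
    [IsMulCommutative A]
    (hmax : ∀ B : Subgroup G, B.Normal → IsMulCommutative B → Nat.card B ≤ Nat.card A) :
    centralizer (A : Set G) ≤ A := by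
  by_contra hle
  obtain ⟨x, hxC, hxA, hx⟩ :=
    hG.exists_mem_notMem_forall_commutator_mem ((le_centralizer A).lt_of_not_ge hle)
  have hAx : A ≤ centralizer {x} := fun a ha =>
    mem_centralizer_singleton_iff.mpr (mem_centralizer_iff.mp hxC a ha)
  have hB : IsMulCommutative ↥(A ⊔ zpowers x) := by
    rw [← le_centralizer_iff_isMulCommutative]
    refine le_trans ?_ (centralizer_inf_centralizer_le_centralizer_sup A x)
    exact sup_le (le_inf (le_centralizer A) hAx)
      (zpowers_le.mpr ⟨hxC, mem_centralizer_singleton_iff.mpr rfl⟩)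
  exact (card_lt_card_of_lt (left_lt_sup.mpr fun h => hxA (h (mem_zpowers x)))).not_ge
    (hmax _ (normal_sup_zpowers_of_commutator_mem hx) hB)

theorem card_centralizer_mul_le (hG : IsPGroup p G) {A : Subgroup G} [A.Normal] {a : ℕ}
    (hA : Nat.card A = p ^ a) (T : Subgroup G) (hT : T.Normal) (hTA : T ≤ A) {m : ℕ}
    (hm : Nat.card T = p ^ m) :
    Nat.card (centralizer (T : Set G)) * p ^ m.choose 2 ≤
      Nat.card (centralizer (A : Set G)) * p ^ a.choose 2 := by
  induction T using WellFoundedGT.induction generalizing m with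
  | _ T ih =>
  rcases hTA.lt_or_eq with hlt | rfl
  · obtain ⟨x, hxA, hxT, hx⟩ := hG.exists_mem_notMem_forall_commutator_mem hlt
    set T' := T ⊔ zpowers x
    have hTT' : T < T' := left_lt_sup.mpr fun h => hxT (h (mem_zpowers x))
    obtain ⟨m', hm'⟩ := IsPGroup.iff_card.mp (hG.to_subgroup T')
    have hmm' : m < m' :=
      (Nat.pow_lt_pow_iff_right hp.out.one_lt).mp (hm ▸ hm' ▸ card_lt_card_of_lt hTT')
    calc Nat.card (centralizer (T : Set G)) * p ^ m.choose 2
        ≤ Nat.card (centralizer (T' : Set G)) * p ^ m * p ^ m.choose 2 :=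
          Nat.mul_le_mul_right _ (hm ▸ card_centralizer_le_card_centralizer_sup_zpowers_mul hx)
      _ = Nat.card (centralizer (T' : Set G)) * p ^ (m + 1).choose 2 := by
          rw [mul_assoc, ← pow_add, Nat.choose_succ_succ', Nat.choose_one_right]
      _ ≤ Nat.card (centralizer (T' : Set G)) * p ^ m'.choose 2 := by
          gcongr
          · exact hp.out.one_lt.le
          · exact hmm'
      _ ≤ Nat.card (centralizer (A : Set G)) * p ^ a.choose 2 :=
          ih T' hTT' (normal_sup_zpowers_of_commutator_mem hx)
            (sup_le hTA (zpowers_le.mpr hxA)) hm'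
  · rw [Nat.pow_right_injective hp.out.two_le (hm.symm.trans hA)]

end IsPGroup

end

theorem suzuki_abelian_normal_subgroup_bound {G : Type*} [Group G]
    {p : ℕ} (hp : p.Prime) {n a : ℕ} (hG : Nat.card G = p ^ n)
    (A : Subgroup G) (hAnorm : A.Normal) (hAcomm : IsMulCommutative A)
    (hA : Nat.card A = p ^ a)
    (hmax : ∀ B : Subgroup G, B.Normal → IsMulCommutative B → Nat.card B ≤ p ^ a) :
    2 * n ≤ a * (a + 1) := by
  have : Fact p.Prime := ⟨hp⟩
  have : Finite G := Nat.finite_of_card_ne_zero (by simp [hG, hp.ne_zero])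
  have hpG : IsPGroup p G := IsPGroup.of_card hG
  have hCA : centralizer (A : Set G) = A :=
    (hpG.centralizer_le_self_of_forall_card_le (hA ▸ hmax)).antisymm (le_centralizer A)
  have hcount := hpG.card_centralizer_mul_le hA ⊥ inferInstance bot_le (m := 0) card_bot
  rw [centralizer_eq_top_iff_subset.mpr (SetLike.coe_subset_coe.mpr bot_le), card_top, hG, hCA,
    hA, Nat.choose_zero_succ, pow_zero, mul_one, ← pow_add] at hcount
  have hn : n ≤ a + a.choose 2 := (Nat.pow_le_pow_iff_right hp.one_lt).mp hcount
  have htri : 2 * (a + a.choose 2) = a * (a + 1) := by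
    rw [Nat.choose_two_right, mul_add, Nat.mul_div_cancel' (Nat.even_mul_pred_self a).two_dvd]
    cases a <;> simp; ring
  omega
end
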